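/- arXiv:1202.5258 — 2 statements merged into one kernel-verified Lean document; each statement's English description precedes it below -/
import Mathlib

section
/- Let k ≥ 1 be odd. Define μ on {-1,1}^k by: μ(x) = 1/(k+1) if x = (1,...,1); μ(x) = (k/(k+1))·(1/C(k,(k+1)/2)) if Σ_{i=1}^k x_i = -1; and μ(x) = 0 otherwise, where C(n,m) denotes the binomial coefficient. Then μ is a probability distribution (its total mass is 1), every coordinate has expectation 0 under μ, and for every pair of distinct coordinates i ≠ j the expectation of x_i · x_j under μ is 0. -/
/-!
`muOdd k` is the mixture, with weights `1/(k+1)` and `k/(k+1)`, of the point mass at the all-ones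
vector and the uniform distribution on the level set `L = {x | ∑ xᵢ = -1}`, which has
`C(k, (k+1)/2)` elements. `L` is invariant under permutations of the coordinates, so the sums of
`xᵢ` and of `xᵢ xⱼ` (`i ≠ j`) over `L` do not depend on `i`, `j`. Summing over the coordinates and
using `∑ xᵢ = -1` and `xᵢ² = 1` on `L` shows that both averages over `L` equal `-1/k`, which
cancels exactly the contribution of the point mass.
-/

/-- The ±1 sign associated to a boolean coordinate. -/
noncomputable def sgn (b : Bool) : ℝ := if b then 1 else -1

/-- The distribution from Fact 2.9 (odd case): mass `1/(k+1)` on the all-ones vector,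
mass `(k/(k+1)) / C(k,(k+1)/2)` on each vector whose coordinates sum to `-1`, and `0`
elsewhere. -/
noncomputable def muOdd (k : ℕ) (x : Fin k → Bool) : ℝ :=
  if x = (fun _ => true) then 1 / (k + 1)
  else if (∑ i : Fin k, sgn (x i)) = -1 then
    ((k : ℝ) / (k + 1)) * (1 / (k.choose ((k + 1) / 2)))
  else 0

open Finset

@[simp] lemma sgn_true : sgn true = 1 := rfl

@[simp] lemma sgn_false : sgn false = -1 := rfl

lemma sgn_mul_self (b : Bool) : sgn b * sgn b = 1 := by
  cases b <;> norm_num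

section PermInvariant

variable {ι β : Type*}

def PermInvariant (s : Finset (ι → β)) : Prop :=
  ∀ σ : Equiv.Perm ι, ∀ x ∈ s, x ∘ σ ∈ s

lemma PermInvariant.sum_comp {s : Finset (ι → β)} (hs : PermInvariant s)
    (σ : Equiv.Perm ι) (F : (ι → β) → ℝ) :
    ∑ x ∈ s, F (x ∘ σ) = ∑ x ∈ s, F x :=
  sum_nbij' (· ∘ σ) (· ∘ σ.symm) (fun x hx => hs σ x hx) (fun x hx => hs σ.symm x hx)
    (fun x _ => by ext; simp) (fun x _ => by ext; simp) (fun _ _ => rfl)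

variable [DecidableEq ι]

lemma PermInvariant.sum_apply_eq {s : Finset (ι → β)} (hs : PermInvariant s)
    (f : β → ℝ) (i i' : ι) :
    ∑ x ∈ s, f (x i) = ∑ x ∈ s, f (x i') := by
  simpa using (hs.sum_comp (Equiv.swap i i') (fun x => f (x i))).symm

lemma PermInvariant.sum_apply_apply_eq {s : Finset (ι → β)} (hs : PermInvariant s)
    (g : β → β → ℝ) {i j j' : ι} (hj : j ≠ i) (hj' : j' ≠ i) :
    ∑ x ∈ s, g (x i) (x j) = ∑ x ∈ s, g (x i) (x j') := by
  simpa [Equiv.swap_apply_of_ne_of_ne hj.symm hj'.symm] using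
    (hs.sum_comp (Equiv.swap j j') (fun x => g (x i) (x j))).symm

variable [Fintype ι] {s : Finset (ι → Bool)} {a : ℝ}

lemma PermInvariant.card_mul_sum_sgn (hs : PermInvariant s)
    (hsum : ∀ x ∈ s, ∑ i, sgn (x i) = a) (i : ι) :
    Fintype.card ι * ∑ x ∈ s, sgn (x i) = a * #s := by
  calc (Fintype.card ι : ℝ) * ∑ x ∈ s, sgn (x i)
      = ∑ i' : ι, ∑ x ∈ s, sgn (x i') := by
        simp [hs.sum_apply_eq sgn _ i]
    _ = a * #s := by
        rw [sum_comm, sum_congr rfl hsum]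
        simp [mul_comm]

lemma PermInvariant.card_sub_one_mul_sum_sgn_mul_sgn (hs : PermInvariant s)
    (hsum : ∀ x ∈ s, ∑ i, sgn (x i) = a) {i j : ι} (hij : i ≠ j) :
    (Fintype.card ι - 1) * ∑ x ∈ s, sgn (x i) * sgn (x j)
      = a * ∑ x ∈ s, sgn (x i) - #s := by
  calc ((Fintype.card ι : ℝ) - 1) * ∑ x ∈ s, sgn (x i) * sgn (x j)
      = ∑ j' ∈ univ.erase i, ∑ x ∈ s, sgn (x i) * sgn (x j') := by
        rw [sum_congr rfl fun j' hj' =>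
          hs.sum_apply_apply_eq (fun b c => sgn b * sgn c) (ne_of_mem_erase hj') hij.symm]
        simp [card_erase_of_mem, Nat.cast_pred (Fintype.card_pos_iff.mpr ⟨i⟩)]
    _ = ∑ x ∈ s, (a * sgn (x i) - 1) := by
        rw [sum_comm]
        refine sum_congr rfl fun x hx => ?_
        rw [← mul_sum, sum_erase_eq_sub (mem_univ i), hsum x hx]
        linear_combination (-1 : ℝ) * sgn_mul_self (x i)
    _ = a * ∑ x ∈ s, sgn (x i) - #s := by
        simp [sum_sub_distrib, mul_sum]

end PermInvariant

noncomputable def sumNegOneSet (k : ℕ) : Finset (Fin k → Bool) :=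
  {x | ∑ i, sgn (x i) = -1}

lemma sum_sgn_eq (k : ℕ) (x : Fin k → Bool) :
    ∑ i, sgn (x i) = k - 2 * #{i | x i = false} := by
  have h (b : Bool) : sgn b = 1 - 2 * if b = false then 1 else 0 := by cases b <;> norm_num
  simp_rw [h]
  rw [sum_sub_distrib, ← mul_sum, sum_boole]
  simp

lemma permInvariant_sumNegOneSet (k : ℕ) : PermInvariant (sumNegOneSet k) := by
  intro σ x hx
  simp only [sumNegOneSet, mem_filter, mem_univ, true_and] at hx ⊢
  rw [← hx]
  exact Equiv.sum_comp σ (fun i => sgn (x i))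

lemma card_filter_card_false_eq {ι : Type*} [Fintype ι] [DecidableEq ι] (m : ℕ) :
    #{x : ι → Bool | #{i | x i = false} = m} = (Fintype.card ι).choose m := by
  rw [← card_univ, ← card_powersetCard]
  refine card_nbij' (fun x => ({i | x i = false} : Finset ι))
    (fun S i => decide (i ∉ S)) ?_ ?_ ?_ ?_
  · intro x hx; simpa using hx
  · intro S hS; simpa using hS
  · intro x _; ext i; cases h : x i <;> simp [h]
  · intro S _; ext i; simp

lemma sumNegOneSet_eq (k : ℕ) :
    sumNegOneSet k = ({x | 2 * #{i | x i = false} = k + 1} : Finset (Fin k → Bool)) := by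
  ext x
  simp only [sumNegOneSet, mem_filter, mem_univ, true_and, sum_sgn_eq]
  constructor
  · intro h; exact_mod_cast (by linarith : (2 * #{i | x i = false} : ℝ) = k + 1)
  · intro h; have := congrArg (Nat.cast (R := ℝ)) h; push_cast at this; linarith

lemma card_sumNegOneSet {k : ℕ} (hk : Odd k) :
    #(sumNegOneSet k) = k.choose ((k + 1) / 2) := by
  have hcount := card_filter_card_false_eq (ι := Fin k) ((k + 1) / 2)
  rw [Fintype.card_fin] at hcount
  rw [sumNegOneSet_eq, ← hcount]
  obtain ⟨t, rfl⟩ := hk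
  exact congrArg _ (filter_congr fun x _ => by omega)

lemma sum_sgn_sumNegOneSet (k : ℕ) (i : Fin k) :
    k * ∑ x ∈ sumNegOneSet k, sgn (x i) = -#(sumNegOneSet k) := by
  simpa using (permInvariant_sumNegOneSet k).card_mul_sum_sgn
    (fun x hx => (mem_filter.mp hx).2) i

lemma sum_sgn_mul_sgn_sumNegOneSet {k : ℕ} {i j : Fin k} (hij : i ≠ j) :
    ∑ x ∈ sumNegOneSet k, sgn (x i) * sgn (x j) = ∑ x ∈ sumNegOneSet k, sgn (x i) := by
  have hpair := (permInvariant_sumNegOneSet k).card_sub_one_mul_sum_sgn_mul_sgn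
    (fun x hx => (mem_filter.mp hx).2) hij
  have hk : (1 : ℝ) < k := by
    exact_mod_cast Fintype.card_fin k ▸ Fintype.one_lt_card_iff_nontrivial.mpr ⟨i, j, hij⟩
  rw [Fintype.card_fin] at hpair
  -- `(k - 1) P = -S - #L` and `k S = -#L` give `(k - 1) P = (k - 1) S`
  exact mul_left_cancel₀ (sub_ne_zero.mpr hk.ne')
    (by linear_combination hpair - sum_sgn_sumNegOneSet k i)

lemma card_sumNegOneSet_ne_zero {k : ℕ} (hk : Odd k) : (#(sumNegOneSet k) : ℝ) ≠ 0 := by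
  rw [card_sumNegOneSet hk, Nat.cast_ne_zero, ← Nat.pos_iff_ne_zero]
  obtain ⟨t, rfl⟩ := hk
  exact Nat.choose_pos (by omega)

lemma true_notMem_sumNegOneSet (k : ℕ) : (fun _ => true) ∉ sumNegOneSet k := by
  simp [sumNegOneSet]
  linarith [k.cast_nonneg (α := ℝ)]

lemma sum_muOdd_mul {k : ℕ} (hk : Odd k) (F : (Fin k → Bool) → ℝ) :
    ∑ x, muOdd k x * F x = F (fun _ => true) / (k + 1)
      + (k / (k + 1)) * ((∑ x ∈ sumNegOneSet k, F x) / #(sumNegOneSet k)) := by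
  have hsplit (x : Fin k → Bool) : muOdd k x * F x
      = (if x = (fun _ => true) then F (fun _ => true) / (k + 1) else 0)
        + if x ∈ sumNegOneSet k then
            (k / (k + 1)) * (F x / #(sumNegOneSet k)) else 0 := by
    by_cases hx : x = fun _ => true
    · subst hx; simp [muOdd, true_notMem_sumNegOneSet]; ring
    · simp only [muOdd, if_neg hx, card_sumNegOneSet hk]
      simp only [sumNegOneSet, mem_filter, mem_univ, true_and]
      split_ifs <;> ring
  simp_rw [hsplit]
  rw [sum_add_distrib, sum_ite_eq', sum_ite_mem, univ_inter,
    ← mul_sum, ← sum_div]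
  simp

lemma muOdd_nonneg (k : ℕ) (x : Fin k → Bool) : 0 ≤ muOdd k x := by
  unfold muOdd
  split_ifs <;> positivity

lemma sum_muOdd {k : ℕ} (hk : Odd k) : ∑ x, muOdd k x = 1 := by
  have hN := card_sumNegOneSet_ne_zero hk
  have h := sum_muOdd_mul hk (fun _ => 1)
  simp only [mul_one, sum_const, nsmul_eq_mul, div_self hN] at h
  rw [h, ← add_div, add_comm, div_self (by positivity)]

lemma sum_muOdd_mul_eq_zero {k : ℕ} (hk : Odd k) {F : (Fin k → Bool) → ℝ}
    (hF : F (fun _ => true) = 1) (hFL : k * ∑ x ∈ sumNegOneSet k, F x = -#(sumNegOneSet k)) :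
    ∑ x, muOdd k x * F x = 0 := by
  have hN := card_sumNegOneSet_ne_zero hk
  rw [sum_muOdd_mul hk, hF]
  field_simp
  linear_combination hFL

theorem stmt1_general (k : ℕ) (hodd : Odd k) :
    (∀ x, 0 ≤ muOdd k x) ∧
    (∑ x : Fin k → Bool, muOdd k x) = 1 ∧
    (∀ i : Fin k, (∑ x : Fin k → Bool, muOdd k x * sgn (x i)) = 0) ∧
    (∀ i j : Fin k, i ≠ j →
      (∑ x : Fin k → Bool, muOdd k x * (sgn (x i) * sgn (x j))) = 0) :=
  ⟨muOdd_nonneg k, sum_muOdd hodd,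
    fun i => sum_muOdd_mul_eq_zero hodd rfl (sum_sgn_sumNegOneSet k i),
    fun i j hij => sum_muOdd_mul_eq_zero hodd (by simp)
      (sum_sgn_mul_sgn_sumNegOneSet hij ▸ sum_sgn_sumNegOneSet k i)⟩

/-- For odd `k ≥ 1`, `muOdd k` is a probability distribution on `{-1,1}^k`
with mean-zero coordinates and pairwise-uncorrelated coordinates. -/
theorem stmt1 (k : ℕ) (hk : 1 ≤ k) (hodd : Odd k) :
    (∀ x, 0 ≤ muOdd k x) ∧
    (∑ x : Fin k → Bool, muOdd k x) = 1 ∧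
    (∀ i : Fin k, (∑ x : Fin k → Bool, muOdd k x * sgn (x i)) = 0) ∧
    (∀ i j : Fin k, i ≠ j →
      (∑ x : Fin k → Bool, muOdd k x * (sgn (x i) * sgn (x j))) = 0) :=
  stmt1_general k hodd
end

section
/- The infimum over a ∈ (1/4, 1] of h₂(a) = (1 - (3·arccos((4a-1)/3))/(2π))/a lies in the closed interval [0.795970, 0.796170]. -/
open Real Set

/-- `h₂(a) = (1 - 3·arccos((4a-1)/3)/(2π))/a`. -/
noncomputable def h₂ (a : ℝ) : ℝ :=
  (1 - (3 * Real.arccos ((4 * a - 1) / 3)) / (2 * Real.pi)) / a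

/-!
With `t = arccos ((4a - 1)/3) ∈ [0, π/2)` we have `4a = 1 + 3 cos t`, so `0.795970 ≤ h₂ a` becomes
`0.795970 · π · (1 + 3 cos t) ≤ 4π - 6t`. This is checked with quartic Taylor bounds for `cos` and
`sin` on three subintervals of `[0, π/2]`; on the critical one, around `t ≈ π/3 - 0.12` (i.e.
`a ≈ 0.7`), the margin is only of order `10⁻⁵`, so there the expansion is taken at `π/3`.
The upper bound is the value `h₂ 0.7`, estimated through `π/3 - 0.12 ≤ arccos 0.6`.
-/

lemma abs_pow_five_div_le_of_abs_le_one {x : ℝ} (hx : |x| ≤ 1) :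
    |x| ^ 5 / 100 ≤ x ^ 4 * (5 / 96) := by
  have : |x| ^ 5 ≤ |x| ^ 4 := pow_le_pow_of_le_one (abs_nonneg x) hx (by norm_num)
  rw [(by decide : Even 4).pow_abs] at this
  nlinarith [pow_nonneg (abs_nonneg x) 5]

namespace Real

lemma cos_le_quartic {x : ℝ} (hx : |x| ≤ 1) : cos x ≤ 1 - x ^ 2 / 2 + x ^ 4 * (5 / 96) := by
  have h := (abs_le.1 (cos_bound hx)).2
  rw [(by decide : Even 4).pow_abs] at h
  linarith

lemma sin_le_quartic {x : ℝ} (hx : |x| ≤ 1) : sin x ≤ x - x ^ 3 / 6 + x ^ 4 * (5 / 96) := by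
  linarith [(abs_le.1 (sin_bound hx)).2, abs_pow_five_div_le_of_abs_le_one hx]

lemma quartic_le_sin {x : ℝ} (hx : |x| ≤ 1) : x - x ^ 3 / 6 - x ^ 4 * (5 / 96) ≤ sin x := by
  linarith [(abs_le.1 (sin_bound hx)).1, abs_pow_five_div_le_of_abs_le_one hx]

end Real

lemma trig_bound_left {t : ℝ} (h0 : 0 ≤ t) (h1 : t ≤ π / 3 - 0.25) :
    0.795970 * π * (1 + 3 * cos t) ≤ 4 * π - 6 * t := by
  have ht : t ≤ 0.798 := by linarith [pi_lt_d6]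
  have hcos := cos_le_quartic (abs_le.2 ⟨by linarith, by linarith⟩ : |t| ≤ 1)
  have hA : 0 ≤ 4 - 0.795970 * (1 + 3 * (1 - t ^ 2 / 2 + t ^ 4 * (5 / 96))) := by
    nlinarith [sq_nonneg (t * t), mul_nonneg h0 (sub_nonneg.2 ht)]
  have hpoly : 6 * t ≤ 3.141592 * (4 - 0.795970 * (1 + 3 * (1 - t ^ 2 / 2 + t ^ 4 * (5 / 96)))) := by
    nlinarith [sq_nonneg (t * t), sq_nonneg (t * (t - 0.798)), mul_nonneg h0 (sub_nonneg.2 ht),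
      mul_nonneg (mul_nonneg h0 (sub_nonneg.2 ht)) (sq_nonneg t)]
  nlinarith [mul_nonneg (sub_nonneg.2 pi_gt_d6.le) hA, pi_pos]

-- `3.1415925` and `1.73205085` stand in for `π` and `√3`; the minimum is near `s = -0.1208`.
lemma middle_poly {s : ℝ} (hs1 : -0.25 ≤ s) (hs2 : s ≤ 0.05) :
    3e-5 ≤ 3.1415925 * (2 - 0.795970 - (3 * 0.795970 / 2) * (1 - s ^ 2 / 2 + s ^ 4 * (5 / 96))
      + (3 * 0.795970 / 2) * 1.73205085 * (s - s ^ 3 / 6 - s ^ 4 * (5 / 96))) - 6 * s := by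
  nlinarith [sq_nonneg (s + 0.1208), sq_nonneg ((s + 0.1208) * (s + 0.25)),
    sq_nonneg ((s + 0.1208) * (s - 0.05)), mul_nonneg (sub_nonneg.2 hs1) (sub_nonneg.2 hs2),
    sq_nonneg (s * (s + 0.1208)),
    mul_nonneg (mul_nonneg (sub_nonneg.2 hs1) (sub_nonneg.2 hs2)) (sq_nonneg (s + 0.1208))]

lemma trig_bound_middle {t : ℝ} (h0 : π / 3 - 0.25 ≤ t) (h1 : t ≤ π / 3 + 0.05) :
    0.795970 * π * (1 + 3 * cos t) ≤ 4 * π - 6 * t := by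
  obtain ⟨s, rfl⟩ : ∃ s, t = π / 3 + s := ⟨t - π / 3, by ring⟩
  have hs1 : -0.25 ≤ s := by linarith
  have hs2 : s ≤ 0.05 := by linarith
  have hs : |s| ≤ 1 := abs_le.2 ⟨by linarith, by linarith⟩
  have hcore := middle_poly hs1 hs2
  have hS1 : -0.3 ≤ s - s ^ 3 / 6 - s ^ 4 * (5 / 96) := by nlinarith [sq_nonneg (s * s)]
  have hS2 : s - s ^ 3 / 6 - s ^ 4 * (5 / 96) ≤ 0.1 := by nlinarith [sq_nonneg (s * s)]
  have hC1 : 0.9 ≤ 1 - s ^ 2 / 2 + s ^ 4 * (5 / 96) := by nlinarith [sq_nonneg (s * s)]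
  have hC2 : 1 - s ^ 2 / 2 + s ^ 4 * (5 / 96) ≤ 1.01 := by nlinarith [sq_nonneg (s * s)]
  have hC := cos_le_quartic hs
  have hS := quartic_le_sin hs
  rw [cos_add, cos_pi_div_three, sin_pi_div_three]
  generalize 1 - s ^ 2 / 2 + s ^ 4 * (5 / 96) = C at *
  generalize s - s ^ 3 / 6 - s ^ 4 * (5 / 96) = S at *
  have hq1 : 1.7320508 ≤ √3 := by rw [le_sqrt (by norm_num) (by norm_num)]; norm_num
  have hq2 : √3 ≤ 1.7320509 := by rw [sqrt_le_left (by norm_num)]; norm_num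
  have hB1 : -1 ≤ 2 - 0.795970 - (3 * 0.795970 / 2) * C + (3 * 0.795970 / 2) * √3 * S := by
    nlinarith [mul_nonneg (sub_nonneg.2 hq1) (sub_nonneg.2 hS1),
      mul_nonneg (sub_nonneg.2 hq2) (sub_nonneg.2 hS2)]
  have hB2 : 2 - 0.795970 - (3 * 0.795970 / 2) * C + (3 * 0.795970 / 2) * √3 * S ≤ 1 := by
    nlinarith [mul_nonneg (sub_nonneg.2 hq1) (sub_nonneg.2 hS2),
      mul_nonneg (sub_nonneg.2 hq2) (sub_nonneg.2 hS1)]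
  have hcos_le : cos s * (1 / 2) - √3 / 2 * sin s ≤ C / 2 - √3 / 2 * S := by
    nlinarith [mul_le_mul_of_nonneg_left hS (sqrt_nonneg 3)]
  nlinarith [mul_le_mul_of_nonneg_left hcos_le pi_pos.le, pi_gt_d6, pi_lt_d6,
    mul_nonneg (sub_nonneg.2 pi_gt_d6.le) (by linarith : 0 ≤ 2 - 0.795970 -
      (3 * 0.795970 / 2) * C + (3 * 0.795970 / 2) * √3 * S + 1),
    mul_nonneg (sub_nonneg.2 hq1) (sub_nonneg.2 hS1)]

lemma trig_bound_right {t : ℝ} (h0 : π / 3 + 0.05 ≤ t) (h1 : t ≤ π / 2) :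
    0.795970 * π * (1 + 3 * cos t) ≤ 4 * π - 6 * t := by
  obtain ⟨u, rfl⟩ : ∃ u, t = π / 2 - u := ⟨π / 2 - t, by ring⟩
  have hu0 : 0 ≤ u := by linarith
  have hu1 : u ≤ 0.4736 := by linarith [pi_lt_d6]
  have hsin := sin_le_quartic (abs_le.2 ⟨by linarith, by linarith⟩ : |u| ≤ 1)
  have hW : -1 ≤ 1 - 0.795970 * (1 + 3 * (u - u ^ 3 / 6 + u ^ 4 * (5 / 96))) := by
    nlinarith [sq_nonneg (u * u), mul_nonneg hu0 (sub_nonneg.2 hu1)]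
  have hpoly :
      0 ≤ 3.14 * (1 - 0.795970 * (1 + 3 * (u - u ^ 3 / 6 + u ^ 4 * (5 / 96)))) - 0.01 + 6 * u := by
    nlinarith [sq_nonneg (u * u), mul_nonneg hu0 (sub_nonneg.2 hu1),
      mul_nonneg (mul_nonneg hu0 (sub_nonneg.2 hu1)) (sq_nonneg u)]
  rw [cos_pi_div_two_sub]
  nlinarith [mul_nonneg (sub_nonneg.2 pi_gt_d2.le) (by linarith : 0 ≤ 1 - 0.795970 *
      (1 + 3 * (u - u ^ 3 / 6 + u ^ 4 * (5 / 96))) + 1),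
    pi_lt_d2, mul_le_mul_of_nonneg_left hsin pi_pos.le]

lemma trig_bound {t : ℝ} (h0 : 0 ≤ t) (h1 : t ≤ π / 2) :
    0.795970 * π * (1 + 3 * cos t) ≤ 4 * π - 6 * t := by
  rcases le_total t (π / 3 - 0.25) with hl | hl
  · exact trig_bound_left h0 hl
  rcases le_total t (π / 3 + 0.05) with hr | hr
  · exact trig_bound_middle hl hr
  · exact trig_bound_right hr h1

lemma le_h₂ {a : ℝ} (ha : a ∈ Ioc (1 / 4) 1) : 0.795970 ≤ h₂ a := by
  obtain ⟨ha1, ha2⟩ := ha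
  have hx0 : 0 ≤ (4 * a - 1) / 3 := by linarith
  have hbound := trig_bound (arccos_nonneg _) (arccos_le_pi_div_two.2 hx0)
  rw [cos_arccos (by linarith) (by linarith)] at hbound
  rw [h₂, le_div_iff₀ (by linarith), le_sub_comm, div_le_iff₀ (by positivity)]
  linarith

lemma pi_div_three_sub_le_arccos : π / 3 - 0.12 ≤ arccos 0.6 := by
  have hsin := sin_ge_sub_cube (by norm_num : (0 : ℝ) ≤ 0.12)
  have hq : 1.732 ≤ √3 := by rw [le_sqrt (by norm_num) (by norm_num)]; norm_num
  have hcos : 0.6 ≤ cos (π / 3 - 0.12) := by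
    rw [cos_sub, cos_pi_div_three, sin_pi_div_three]
    nlinarith [one_sub_sq_div_two_le_cos (x := 0.12),
      mul_le_mul_of_nonneg_left hsin (sqrt_nonneg 3),
      mul_le_mul_of_nonneg_right hq (by norm_num : (0 : ℝ) ≤ 0.12 - 0.12 ^ 3 / 6)]
  rw [← arccos_cos (x := π / 3 - 0.12) (by linarith [pi_gt_three]) (by linarith [pi_pos])]
  exact arccos_le_arccos hcos

lemma h₂_seven_tenths_le : h₂ 0.7 ≤ 0.796170 := by
  rw [h₂, show (4 * (0.7 : ℝ) - 1) / 3 = 0.6 by norm_num, div_le_iff₀ (by norm_num), sub_le_comm,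
    le_div_iff₀ (by positivity)]
  nlinarith [pi_div_three_sub_le_arccos, pi_gt_d6]

/-- the infimum of `h₂` over `(1/4,1]` lies in `[0.795970, 0.796170]`. -/
theorem stmt8 : sInf (h₂ '' Set.Ioc (1/4 : ℝ) 1) ∈ Set.Icc (0.795970 : ℝ) 0.796170 := by
  have hmem : h₂ 0.7 ∈ h₂ '' Ioc (1 / 4) 1 := mem_image_of_mem h₂ ⟨by norm_num, by norm_num⟩
  have hlb : ∀ y ∈ h₂ '' Ioc (1 / 4 : ℝ) 1, 0.795970 ≤ y := by
    rintro _ ⟨a, ha, rfl⟩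
    exact le_h₂ ha
  exact ⟨le_csInf ⟨_, hmem⟩ hlb, (csInf_le ⟨_, hlb⟩ hmem).trans h₂_seven_tenths_le⟩
end
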